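/- Let A be a commutative noetherian ring and M a finitely generated A-module, and let ι: M → Sym(M) denote the canonical inclusion into the degree-one part of the symmetric algebra. For an element m ∈ M, one has ι(m) ∈ I(M) if and only if ev_M(m) = 0. Consequently, the degree-one graded component of the Rees algebra R(M) = Sym(M)/I(M) is isomorphic to the torsionless quotient M^tl. -/

import Mathlib

open Module LinearMap TensorProduct

/-- The relation on the tensor algebra whose quotient is the symmetric algebra. -/
inductive SymRel (A : Type) [CommRing A] (M : Type) [AddCommGroup M] [Module A M] :
    TensorAlgebra A M → TensorAlgebra A M → Prop
  | mul_comm (x y : M) : SymRel A M (TensorAlgebra.ι A x * TensorAlgebra.ι A y)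
      (TensorAlgebra.ι A y * TensorAlgebra.ι A x)

/-- The symmetric algebra `Sym(M)` of a module `M`. -/
abbrev SymmAlg (A : Type) [CommRing A] (M : Type) [AddCommGroup M] [Module A M] : Type :=
  RingQuot (SymRel A M)

variable {A : Type} [CommRing A] {M N L : Type} [AddCommGroup M] [Module A M]
  [AddCommGroup N] [Module A N] [AddCommGroup L] [Module A L]

private lemma symmAlg_comm_aux (x y : TensorAlgebra A M) :
    RingQuot.mkAlgHom A (SymRel A M) x * RingQuot.mkAlgHom A (SymRel A M) y =
      RingQuot.mkAlgHom A (SymRel A M) y * RingQuot.mkAlgHom A (SymRel A M) x := by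
  induction x using TensorAlgebra.induction with
  | algebraMap r => simp [Algebra.commutes]
  | ι m =>
    induction y using TensorAlgebra.induction with
    | algebraMap r => simp [Algebra.commutes]
    | ι n => simpa [map_mul] using (RingQuot.mkAlgHom_rel A (SymRel.mul_comm m n))
    | mul a b ha hb => rw [map_mul, ← mul_assoc, ha, mul_assoc, hb, ← mul_assoc]
    | add a b ha hb => rw [map_add, mul_add, add_mul, ha, hb]
  | mul a b ha hb => rw [map_mul, mul_assoc, hb, ← mul_assoc, ha, mul_assoc]
  | add a b ha hb => rw [map_add, add_mul, mul_add, ha, hb]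

noncomputable instance (A : Type) [CommRing A] (M : Type) [AddCommGroup M] [Module A M] :
    CommRing (SymmAlg A M) :=
  { (inferInstance : Ring (SymmAlg A M)) with
    mul_comm := fun a b => by
      obtain ⟨x, rfl⟩ := RingQuot.mkAlgHom_surjective A (SymRel A M) a
      obtain ⟨y, rfl⟩ := RingQuot.mkAlgHom_surjective A (SymRel A M) b
      exact symmAlg_comm_aux x y }

/-- The canonical inclusion of `M` into the degree-one part of `Sym(M)`. -/
noncomputable def symι (A : Type) [CommRing A] {M : Type} [AddCommGroup M] [Module A M] :
    M →ₗ[A] SymmAlg A M :=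
  (RingQuot.mkAlgHom A (SymRel A M)).toLinearMap ∘ₗ TensorAlgebra.ι A

/-- Functoriality of the symmetric algebra: `Sym(g) : Sym(M) → Sym(N)`. -/
noncomputable def symMap (A : Type) [CommRing A] {M N : Type} [AddCommGroup M] [Module A M]
    [AddCommGroup N] [Module A N] (g : M →ₗ[A] N) : SymmAlg A M →ₐ[A] SymmAlg A N :=
  RingQuot.liftAlgHom A ⟨TensorAlgebra.lift A ((symι A) ∘ₗ g), by
    intro x y h
    cases h with
    | mul_comm a b => simp [mul_comm]⟩

@[simp] lemma symMap_ι (g : M →ₗ[A] N) (m : M) :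
    symMap A g (symι A m) = symι A (g m) := by
  simp [symMap, symι, RingQuot.liftAlgHom_mkAlgHom_apply]

lemma symmAlg_hom_ext {B : Type} [Semiring B] [Algebra A B] {f g : SymmAlg A M →ₐ[A] B}
    (h : ∀ m : M, f (symι A m) = g (symι A m)) : f = g := by
  have key : f.comp (RingQuot.mkAlgHom A (SymRel A M)) =
      g.comp (RingQuot.mkAlgHom A (SymRel A M)) := by
    apply TensorAlgebra.hom_ext
    apply LinearMap.ext
    intro m
    simpa [symι] using h m
  apply AlgHom.ext
  intro x
  obtain ⟨x, rfl⟩ := RingQuot.mkAlgHom_surjective A (SymRel A M) x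
  exact AlgHom.congr_fun key x

lemma symMap_comp_apply (g : N →ₗ[A] L) (f : M →ₗ[A] N) (x : SymmAlg A M) :
    symMap A (g ∘ₗ f) x = symMap A g (symMap A f x) := by
  have : symMap A (g ∘ₗ f) = (symMap A g).comp (symMap A f) := by
    apply symmAlg_hom_ext
    intro m
    simp
  rw [this]; rfl

/-- The data of a linear map from `M` into a finitely generated free module. -/
structure FreeTarget (A : Type) [CommRing A] (M : Type) [AddCommGroup M] [Module A M] where
  E : Type
  [instAddCommGroup : AddCommGroup E]
  [instModule : Module A E]
  [instFree : Module.Free A E]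
  [instFinite : Module.Finite A E]
  g : M →ₗ[A] E

attribute [instance] FreeTarget.instAddCommGroup FreeTarget.instModule
  FreeTarget.instFree FreeTarget.instFinite

/-- The ideal `I(M) ⊆ Sym(M)`: the intersection over all maps `g : M → E` into finitely
generated free modules of the kernels of `Sym(g)`. -/
noncomputable def reesIdeal (A : Type) [CommRing A] (M : Type) [AddCommGroup M]
    [Module A M] : Ideal (SymmAlg A M) :=
  ⨅ d : FreeTarget A M, RingHom.ker (symMap A d.g)

lemma reesIdeal_le_comap (f : M →ₗ[A] N) :
    reesIdeal A M ≤ Ideal.comap (symMap A f) (reesIdeal A N) := by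
  intro x hx
  simp only [reesIdeal, Ideal.mem_iInf] at hx
  simp only [Ideal.mem_comap, reesIdeal, Ideal.mem_iInf]
  intro d
  have hd := hx ⟨d.E, d.g ∘ₗ f⟩
  rw [RingHom.mem_ker] at hd ⊢
  rw [← symMap_comp_apply]
  exact hd

/-- The Rees algebra `R(M) = Sym(M)/I(M)` of a module `M`. -/
noncomputable abbrev ReesAlg (A : Type) [CommRing A] (M : Type) [AddCommGroup M]
    [Module A M] : Type :=
  SymmAlg A M ⧸ reesIdeal A M

/-- The induced map `R(f) : R(M) → R(N)` of Rees algebras. -/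
noncomputable def reesMap (A : Type) [CommRing A] {M N : Type} [AddCommGroup M]
    [Module A M] [AddCommGroup N] [Module A N] (f : M →ₗ[A] N) :
    ReesAlg A M →ₐ[A] ReesAlg A N :=
  Ideal.quotientMapₐ (reesIdeal A N) (symMap A f) (reesIdeal_le_comap f)

/-! Maps into free modules are separated by linear functionals, so `ι(m)` dies under every
`Sym(g)` exactly when every functional kills `m`; for the converse, `Sym(φ)` with `φ : M → A`
sends `ι(m)` to `ι(φ m)`, and `ι : A → Sym(A)` is injective because `Sym(A)` maps onto `A[X]`
with `ι(a) ↦ a X`. Both the degree-one part of `R(M)` and `M^tl` are then `M` modulo the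
same kernel. -/

open Polynomial

variable {P : Type} [AddCommGroup P] [Module A P]

noncomputable def LinearMap.rangeEquivOfKerEq {f : M →ₗ[A] N} {g : M →ₗ[A] P}
    (h : LinearMap.ker f = LinearMap.ker g) : LinearMap.range f ≃ₗ[A] LinearMap.range g :=
  f.quotKerEquivRange.symm ≪≫ₗ Submodule.quotEquivOfEq _ _ h ≪≫ₗ g.quotKerEquivRange

noncomputable def symToPolynomial : SymmAlg A A →ₐ[A] A[X] :=
  RingQuot.liftAlgHom A ⟨TensorAlgebra.lift A (LinearMap.toSpanSingleton A A[X] X), by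
    rintro _ _ ⟨a, b⟩
    simp only [map_mul, TensorAlgebra.lift_ι_apply]
    exact mul_comm _ _⟩

@[simp] lemma symToPolynomial_symι (a : A) : symToPolynomial (symι A a) = C a * X := by
  simp [symToPolynomial, symι, RingQuot.liftAlgHom_mkAlgHom_apply, Polynomial.smul_eq_C_mul]

lemma symι_self_injective : Function.Injective (symι A : A →ₗ[A] SymmAlg A A) := by
  intro a b h
  simpa using congrArg (fun x => (symToPolynomial x).coeff 1) h

lemma mem_reesIdeal_iff {x : SymmAlg A M} :
    x ∈ reesIdeal A M ↔ ∀ d : FreeTarget A M, symMap A d.g x = 0 := by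
  simp only [reesIdeal, Ideal.mem_iInf, RingHom.mem_ker]

lemma apply_eq_zero_of_eval_eq_zero [Module.Projective A N] (g : M →ₗ[A] N) {m : M}
    (hm : Module.Dual.eval A M m = 0) : g m = 0 :=
  (Module.forall_dual_apply_eq_zero_iff A (g m)).mp fun φ => LinearMap.congr_fun hm (φ ∘ₗ g)

theorem symι_mem_reesIdeal_iff (m : M) :
    symι A m ∈ reesIdeal A M ↔ Module.Dual.eval A M m = 0 := by
  rw [mem_reesIdeal_iff]
  constructor
  · intro h
    ext φ
    apply symι_self_injective
    simpa using h ⟨A, φ⟩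
  · intro hm d
    rw [symMap_ι, apply_eq_zero_of_eval_eq_zero d.g hm, map_zero]

theorem ker_mk_comp_symι :
    LinearMap.ker ((Ideal.Quotient.mkₐ A (reesIdeal A M)).toLinearMap ∘ₗ symι A) =
      LinearMap.ker (Module.Dual.eval A M) := by
  ext m
  simpa [Ideal.Quotient.eq_zero_iff_mem] using symι_mem_reesIdeal_iff m

theorem stmt7 (A : Type) [CommRing A]
    (M : Type) [AddCommGroup M] [Module A M] :
    (∀ m : M, symι A m ∈ reesIdeal A M ↔ Module.Dual.eval A M m = 0) ∧
      Nonempty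
        (↥(LinearMap.range
            ((Ideal.Quotient.mkₐ A (reesIdeal A M)).toLinearMap ∘ₗ
              (symι A : M →ₗ[A] SymmAlg A M))) ≃ₗ[A]
          ↥(LinearMap.range (Module.Dual.eval A M))) :=
  ⟨symι_mem_reesIdeal_iff, ⟨LinearMap.rangeEquivOfKerEq ker_mk_comp_symι⟩⟩
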